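/- Let f : ℝ × ℝ → ℝ be three times continuously differentiable and everywhere positive, and g : ℝ × ℝ → ℂ twice continuously differentiable, in the variables (y,s), satisfying everywhere the bilinear system f_{sy} g − f_s g_y − f_y g_s + f g_{sy} = f·g and 2(f_{ss} f − f_s²) = (1/2)|g|². Define φ(y,s) = y − 2 f_s(y,s)/f(y,s), and suppose Q : ℝ × ℝ → ℂ is twice continuously differentiable and satisfies g(y,s)/f(y,s) = Q(φ(y,s), −s) for all (y,s). Then at every point (y,s) where 1 − 2(log f)_{sy}(y,s) ≠ 0, the complex short pulse equation holds at the image point: Q_{xt} + Q + (1/2)(|Q|² Q_x)_x = 0 evaluated at (φ(y,s), −s), where the subscripts x, t denote partial derivatives of Q in its first and second arguments. -/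

import Mathlib

/-!
Put `u = g / f` and `X = y - 2 (log f)_s`. Expanding `D_s D_y f·(f u)` turns the first bilinear
equation into `u_{sy} = (1 - 2 (log f)_{sy}) u = X_y u`, and the second one says
`X_s = -2 (log f)_{ss} = -|u|² / 2`. As `u (y, s) = Q (X, -s)`, the chain rule gives
`u_s = -|Q|² Q_x / 2 - Q_t` along the hodograph, and differentiating once more in `y` gives
`u_{sy} = X_y (-(|Q|² Q_x)_x / 2 - Q_{tx})`. Comparing the two expressions for `u_{sy}`, dividing
by `X_y ≠ 0` and using `Q_{tx} = Q_{xt}` yields the complex short pulse equation.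
-/

open Complex

/-- Partial derivative in the first variable of a complex-valued function. -/
noncomputable def pd1C (F : ℝ → ℝ → ℂ) (y s : ℝ) : ℂ := deriv (fun y' => F y' s) y

/-- Partial derivative in the second variable of a complex-valued function. -/
noncomputable def pd2C (F : ℝ → ℝ → ℂ) (y s : ℝ) : ℂ := deriv (fun s' => F y s') s

/-- Partial derivative in the first variable of a real-valued function. -/
noncomputable def pd1R (F : ℝ → ℝ → ℝ) (y s : ℝ) : ℝ := deriv (fun y' => F y' s) y

/-- Partial derivative in the second variable of a real-valued function. -/
noncomputable def pd2R (F : ℝ → ℝ → ℝ) (y s : ℝ) : ℝ := deriv (fun s' => F y s') s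

open Function

section Slice

variable {E : Type*} [NormedAddCommGroup E] [NormedSpace ℝ E] {F : ℝ → ℝ → E}

theorem hasDerivAt_slice_fst {y s : ℝ} (hF : DifferentiableAt ℝ (uncurry F) (y, s)) :
    HasDerivAt (fun y' => F y' s) (fderiv ℝ (uncurry F) (y, s) (1, 0)) y :=
  (hF.hasFDerivAt.comp_hasDerivAt y ((hasDerivAt_id' y).prodMk (hasDerivAt_const y s)) :)

theorem hasDerivAt_slice_snd {y s : ℝ} (hF : DifferentiableAt ℝ (uncurry F) (y, s)) :
    HasDerivAt (fun s' => F y s') (fderiv ℝ (uncurry F) (y, s) (0, 1)) s :=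
  (hF.hasFDerivAt.comp_hasDerivAt s ((hasDerivAt_const s y).prodMk (hasDerivAt_id' s)) :)

theorem uncurry_deriv_slice_fst (hF : Differentiable ℝ (uncurry F)) :
    uncurry (fun y s => deriv (fun y' => F y' s) y) = fun p => fderiv ℝ (uncurry F) p (1, 0) :=
  funext fun p => (hasDerivAt_slice_fst (hF p)).deriv

theorem uncurry_deriv_slice_snd (hF : Differentiable ℝ (uncurry F)) :
    uncurry (fun y s => deriv (fun s' => F y s') s) = fun p => fderiv ℝ (uncurry F) p (0, 1) :=
  funext fun p => (hasDerivAt_slice_snd (hF p)).deriv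

theorem contDiff_uncurry_deriv_slice_fst {m n : WithTop ℕ∞} (hF : ContDiff ℝ n (uncurry F))
    (h : m + 1 ≤ n) : ContDiff ℝ m (uncurry fun y s => deriv (fun y' => F y' s) y) := by
  rw [uncurry_deriv_slice_fst (hF.differentiable (fun hn => by simp [hn] at h))]
  exact (hF.fderiv_right h).clm_apply contDiff_const

theorem contDiff_uncurry_deriv_slice_snd {m n : WithTop ℕ∞} (hF : ContDiff ℝ n (uncurry F))
    (h : m + 1 ≤ n) : ContDiff ℝ m (uncurry fun y s => deriv (fun s' => F y s') s) := by
  rw [uncurry_deriv_slice_snd (hF.differentiable (fun hn => by simp [hn] at h))]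
  exact (hF.fderiv_right h).clm_apply contDiff_const

theorem deriv_slice_snd_deriv_slice_fst_comm (hF : ContDiff ℝ 2 (uncurry F)) (x t : ℝ) :
    deriv (fun t' => deriv (fun x' => F x' t') x) t
      = deriv (fun x' => deriv (fun t' => F x' t') t) x := by
  have hD : Differentiable ℝ (uncurry F) := hF.differentiable two_ne_zero
  have hD2 : Differentiable ℝ (fderiv ℝ (uncurry F)) :=
    (hF.fderiv_right (by norm_num)).differentiable one_ne_zero
  have hfst : ContDiff ℝ 1 (uncurry fun y s => deriv (fun y' => F y' s) y) :=
    contDiff_uncurry_deriv_slice_fst hF (by norm_num)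
  have hsnd : ContDiff ℝ 1 (uncurry fun y s => deriv (fun s' => F y s') s) :=
    contDiff_uncurry_deriv_slice_snd hF (by norm_num)
  rw [(hasDerivAt_slice_snd (hfst.differentiable one_ne_zero (x, t))).deriv,
    (hasDerivAt_slice_fst (hsnd.differentiable one_ne_zero (x, t))).deriv,
    uncurry_deriv_slice_fst hD, uncurry_deriv_slice_snd hD,
    fderiv_clm_apply (hD2 _) (differentiableAt_const _),
    fderiv_clm_apply (hD2 _) (differentiableAt_const _)]
  simpa using ((hF.contDiffAt (x := (x, t))).isSymmSndFDerivAt (by simp) (0, 1) (1, 0))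

end Slice

section Partial

variable {F G : ℝ → ℝ → ℂ} {y s : ℝ}

theorem hasDerivAt_pd1C (hF : DifferentiableAt ℝ (uncurry F) (y, s)) :
    HasDerivAt (fun y' => F y' s) (pd1C F y s) y :=
  (hasDerivAt_slice_fst hF).differentiableAt.hasDerivAt

theorem hasDerivAt_pd2C (hF : DifferentiableAt ℝ (uncurry F) (y, s)) :
    HasDerivAt (fun s' => F y s') (pd2C F y s) s :=
  (hasDerivAt_slice_snd hF).differentiableAt.hasDerivAt

theorem hasDerivAt_pd1R {F : ℝ → ℝ → ℝ} (hF : DifferentiableAt ℝ (uncurry F) (y, s)) :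
    HasDerivAt (fun y' => F y' s) (pd1R F y s) y :=
  (hasDerivAt_slice_fst hF).differentiableAt.hasDerivAt

theorem hasDerivAt_pd2R {F : ℝ → ℝ → ℝ} (hF : DifferentiableAt ℝ (uncurry F) (y, s)) :
    HasDerivAt (fun s' => F y s') (pd2R F y s) s :=
  (hasDerivAt_slice_snd hF).differentiableAt.hasDerivAt

theorem hasDerivAt_comp_curve {a b : ℝ → ℝ} {a' b' τ : ℝ}
    (hF : DifferentiableAt ℝ (uncurry F) (a τ, b τ)) (ha : HasDerivAt a a' τ)
    (hb : HasDerivAt b b' τ) :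
    HasDerivAt (fun τ => F (a τ) (b τ)) (a' * pd1C F (a τ) (b τ) + b' * pd2C F (a τ) (b τ)) τ := by
  have h := hF.hasFDerivAt.comp_hasDerivAt τ (ha.prodMk hb)
  have hsplit : ((a', b') : ℝ × ℝ) = a' • ((1 : ℝ), (0 : ℝ)) + b' • ((0 : ℝ), (1 : ℝ)) := by simp
  rwa [hsplit, map_add, map_smul, map_smul, ← (hasDerivAt_slice_fst hF).deriv,
    ← (hasDerivAt_slice_snd hF).deriv, real_smul, real_smul] at h

theorem pd2C_pd1C_comm (hF : ContDiff ℝ 2 (uncurry F)) (x t : ℝ) :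
    pd2C (pd1C F) x t = pd1C (pd2C F) x t :=
  deriv_slice_snd_deriv_slice_fst_comm hF x t

theorem pd1C_mul (hF : DifferentiableAt ℝ (uncurry F) (y, s))
    (hG : DifferentiableAt ℝ (uncurry G) (y, s)) :
    pd1C (fun y s => F y s * G y s) y s = pd1C F y s * G y s + F y s * pd1C G y s :=
  ((hasDerivAt_pd1C hF).mul (hasDerivAt_pd1C hG)).deriv

theorem pd2C_mul (hF : DifferentiableAt ℝ (uncurry F) (y, s))
    (hG : DifferentiableAt ℝ (uncurry G) (y, s)) :
    pd2C (fun y s => F y s * G y s) y s = pd2C F y s * G y s + F y s * pd2C G y s :=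
  ((hasDerivAt_pd2C hF).mul (hasDerivAt_pd2C hG)).deriv

theorem pd1C_pd2C_mul (hF : ContDiff ℝ 2 (uncurry F)) (hG : ContDiff ℝ 2 (uncurry G)) :
    pd1C (pd2C fun y s => F y s * G y s) y s
      = pd1C (pd2C F) y s * G y s + pd2C F y s * pd1C G y s
        + pd1C F y s * pd2C G y s + F y s * pd1C (pd2C G) y s := by
  have hF1 := hF.differentiable two_ne_zero
  have hG1 := hG.differentiable two_ne_zero
  have hFs : Differentiable ℝ (uncurry (pd2C F)) :=
    (contDiff_uncurry_deriv_slice_snd hF (by norm_num)).differentiable one_ne_zero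
  have hGs : Differentiable ℝ (uncurry (pd2C G)) :=
    (contDiff_uncurry_deriv_slice_snd hG (by norm_num)).differentiable one_ne_zero
  rw [show pd2C (fun y s => F y s * G y s) = fun y s => pd2C F y s * G y s + F y s * pd2C G y s
    from funext₂ fun y s => pd2C_mul (hF1 _) (hG1 _)]
  exact (((hasDerivAt_pd1C (hFs _)).mul (hasDerivAt_pd1C (hG1 _))).add
    ((hasDerivAt_pd1C (hF1 _)).mul (hasDerivAt_pd1C (hGs _)))).deriv.trans (by ring)

theorem pd1C_ofReal {F : ℝ → ℝ → ℝ} (hF : Differentiable ℝ (uncurry F)) :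
    pd1C (fun y s => (F y s : ℂ)) = fun y s => (pd1R F y s : ℂ) :=
  funext₂ fun _ _ => (hasDerivAt_pd1R (hF _)).ofReal_comp.deriv

theorem pd2C_ofReal {F : ℝ → ℝ → ℝ} (hF : Differentiable ℝ (uncurry F)) :
    pd2C (fun y s => (F y s : ℂ)) = fun y s => (pd2R F y s : ℂ) :=
  funext₂ fun _ _ => (hasDerivAt_pd2R (hF _)).ofReal_comp.deriv

end Partial

noncomputable def hirotaDsDy (F G : ℝ → ℝ → ℂ) (y s : ℝ) : ℂ :=
  pd1C (pd2C F) y s * G y s - pd2C F y s * pd1C G y s - pd1C F y s * pd2C G y s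
    + F y s * pd1C (pd2C G) y s

theorem hirotaDsDy_mul_right {F U : ℝ → ℝ → ℂ} (hF : ContDiff ℝ 2 (uncurry F))
    (hU : ContDiff ℝ 2 (uncurry U)) (y s : ℝ) :
    hirotaDsDy F (fun y s => F y s * U y s) y s
      = F y s ^ 2 * pd1C (pd2C U) y s
        + 2 * (F y s * pd1C (pd2C F) y s - pd2C F y s * pd1C F y s) * U y s := by
  have hF1 := hF.differentiable two_ne_zero
  have hU1 := hU.differentiable two_ne_zero
  rw [hirotaDsDy, pd1C_pd2C_mul hF hU, pd1C_mul (hF1 _) (hU1 _), pd2C_mul (hF1 _) (hU1 _)]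
  ring

section Log

variable {f : ℝ → ℝ → ℝ}

theorem pd2R_log (hpos : ∀ y s, 0 < f y s) (hf : Differentiable ℝ (uncurry f)) :
    pd2R (fun y s => Real.log (f y s)) = fun y s => pd2R f y s / f y s :=
  funext₂ fun y s => ((hasDerivAt_pd2R (hf _)).log (hpos y s).ne').deriv

theorem pd1R_pd2R_log (hpos : ∀ y s, 0 < f y s) (hf : ContDiff ℝ 2 (uncurry f)) (y s : ℝ) :
    pd1R (pd2R fun y s => Real.log (f y s)) y s
      = (f y s * pd1R (pd2R f) y s - pd2R f y s * pd1R f y s) / f y s ^ 2 := by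
  have hfs : Differentiable ℝ (uncurry (pd2R f)) :=
    (contDiff_uncurry_deriv_slice_snd hf (by norm_num)).differentiable one_ne_zero
  rw [pd2R_log hpos (hf.differentiable two_ne_zero)]
  exact ((hasDerivAt_pd1R (hfs _)).div (hasDerivAt_pd1R (hf.differentiable two_ne_zero _))
    (hpos y s).ne').deriv.trans (by ring)

end Log

section Hodograph

variable {f : ℝ → ℝ → ℝ}

theorem hasDerivAt_hodograph_fst (hpos : ∀ y s, 0 < f y s) (hf : ContDiff ℝ 2 (uncurry f))
    (y s : ℝ) :
    HasDerivAt (fun y' => y' - 2 * pd2R f y' s / f y' s)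
      (1 - 2 * pd1R (pd2R fun y s => Real.log (f y s)) y s) y := by
  have hL : ContDiff ℝ 2 (uncurry fun y s => Real.log (f y s)) :=
    hf.log fun p => (hpos p.1 p.2).ne'
  have hLs : Differentiable ℝ (uncurry (pd2R fun y s => Real.log (f y s))) :=
    (contDiff_uncurry_deriv_slice_snd hL (by norm_num)).differentiable one_ne_zero
  have hφ : (fun y' => y' - 2 * pd2R f y' s / f y' s)
      = fun y' => y' - 2 * pd2R (fun y s => Real.log (f y s)) y' s := by
    simp only [pd2R_log hpos (hf.differentiable two_ne_zero), mul_div_assoc]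
  rw [hφ]
  exact (hasDerivAt_id' y).sub ((hasDerivAt_pd1R (hLs (y, s))).const_mul 2)

theorem hasDerivAt_hodograph_snd {g : ℝ → ℝ → ℂ} (hpos : ∀ y s, 0 < f y s)
    (hf : ContDiff ℝ 2 (uncurry f)) {y s : ℝ}
    (hbil : 2 * (pd2R (pd2R f) y s * f y s - (pd2R f y s) ^ 2) = (1/2) * ‖g y s‖ ^ 2) :
    HasDerivAt (fun s' => y - 2 * pd2R f y s' / f y s') (-(1/2) * ‖g y s / f y s‖ ^ 2) s := by
  have hfs : Differentiable ℝ (uncurry (pd2R f)) :=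
    (contDiff_uncurry_deriv_slice_snd hf (by norm_num)).differentiable one_ne_zero
  have h := (hasDerivAt_const s y).sub (((hasDerivAt_pd2R (hfs (y, s))).div
    (hasDerivAt_pd2R (hf.differentiable two_ne_zero (y, s))) (hpos y s).ne').const_mul 2)
  simp only [mul_div_assoc]
  refine h.congr_deriv ?_
  rw [norm_div, Complex.norm_real, Real.norm_of_nonneg (hpos y s).le]
  have hf0 := (hpos y s).ne'
  field_simp
  linear_combination (-2) * hbil

end Hodograph

theorem pd1C_pd2C_div_of_hirotaDsDy {f : ℝ → ℝ → ℝ} {g : ℝ → ℝ → ℂ}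
    (hpos : ∀ y s, 0 < f y s) (hf : ContDiff ℝ 2 (uncurry f)) (hg : ContDiff ℝ 2 (uncurry g))
    {y s : ℝ} (hbil : hirotaDsDy (fun y s => (f y s : ℂ)) g y s = f y s * g y s) :
    pd1C (pd2C fun y s => g y s / f y s) y s
      = ((1 - 2 * pd1R (pd2R fun y s => Real.log (f y s)) y s : ℝ) : ℂ) * (g y s / f y s) := by
  have hne : ∀ y s, (f y s : ℂ) ≠ 0 := fun y s => ofReal_ne_zero.2 (hpos y s).ne'
  have hF : ContDiff ℝ 2 (uncurry fun y s => (f y s : ℂ)) := ofRealCLM.contDiff.comp hf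
  have hU : ContDiff ℝ 2 (uncurry fun y s => g y s / f y s) :=
    hg.mul (hF.inv fun p => hne p.1 p.2)
  have hgfU : g = fun y s => (f y s : ℂ) * (g y s / f y s) :=
    funext₂ fun y s => (mul_div_cancel₀ _ (hne y s)).symm
  rw [hgfU, hirotaDsDy_mul_right hF hU, pd2C_ofReal (hf.differentiable two_ne_zero),
    pd1C_ofReal (hf.differentiable two_ne_zero),
    pd1C_ofReal (F := pd2R f)
      ((contDiff_uncurry_deriv_slice_snd hf (by norm_num)).differentiable one_ne_zero)] at hbil
  beta_reduce at hbil
  rw [pd1R_pd2R_log hpos hf]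
  set U := g y s / (f y s : ℂ)
  push_cast
  have hf0 := hne y s
  field_simp
  linear_combination hbil

theorem csp_of_hodograph {Q : ℝ → ℝ → ℂ} {X : ℝ → ℝ → ℝ} (hQ : ContDiff ℝ 2 (uncurry Q))
    (hXs : ∀ y s, HasDerivAt (fun s' => X y s') (-(1/2) * ‖Q (X y s) (-s)‖ ^ 2) s)
    {y s ρ : ℝ} (hXy : HasDerivAt (fun y' => X y' s) ρ y) (hρ : ρ ≠ 0)
    (hmixed : pd1C (pd2C fun y s => Q (X y s) (-s)) y s = ρ * Q (X y s) (-s)) :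
    pd2C (pd1C Q) (X y s) (-s) + Q (X y s) (-s)
      + (1/2) * pd1C (fun x t => (‖Q x t‖ : ℂ) ^ 2 * pd1C Q x t) (X y s) (-s) = 0 := by
  set P : ℝ → ℝ → ℂ := fun x t => (‖Q x t‖ : ℂ) ^ 2 * pd1C Q x t
  set W : ℝ → ℝ → ℂ := fun x t => -(1/2) * P x t - pd2C Q x t
  have hP : ContDiff ℝ 1 (uncurry P) := by
    have hN : ContDiff ℝ 1 fun p => ((‖uncurry Q p‖ ^ 2 : ℝ) : ℂ) :=
      ofRealCLM.contDiff.comp ((contDiff_norm_sq ℝ).comp (hQ.of_le one_le_two))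
    have hPN : uncurry P = fun p => ((‖uncurry Q p‖ ^ 2 : ℝ) : ℂ) * uncurry (pd1C Q) p :=
      funext fun p => by push_cast; rfl
    rw [hPN]
    exact hN.mul (contDiff_uncurry_deriv_slice_fst hQ (by norm_num))
  have hQt : ContDiff ℝ 1 (uncurry (pd2C Q)) := contDiff_uncurry_deriv_slice_snd hQ (by norm_num)
  have hW : ContDiff ℝ 1 (uncurry W) := (contDiff_const.mul hP).sub hQt
  have hus : pd2C (fun y s => Q (X y s) (-s)) = fun y s => W (X y s) (-s) :=
    funext₂ fun y s => by
      refine (hasDerivAt_comp_curve (hQ.differentiable two_ne_zero _) (hXs y s)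
        (hasDerivAt_neg' s)).deriv.trans ?_
      simp only [W, P]
      push_cast
      ring
  have hWx : pd1C W (X y s) (-s) = -(1/2) * pd1C P (X y s) (-s) - pd1C (pd2C Q) (X y s) (-s) :=
    (((hasDerivAt_pd1C (hP.differentiable one_ne_zero _)).const_mul _).sub
      (hasDerivAt_pd1C (hQt.differentiable one_ne_zero _))).deriv
  have huWx : pd1C (pd2C fun y s => Q (X y s) (-s)) y s = ρ * pd1C W (X y s) (-s) := by
    rw [hus]
    refine (hasDerivAt_comp_curve (hW.differentiable one_ne_zero _) hXy
      (hasDerivAt_const y (-s))).deriv.trans ?_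
    simp
  rw [huWx, hWx] at hmixed
  have hcsp := mul_left_cancel₀ (ofReal_ne_zero.2 hρ) hmixed
  rw [pd2C_pd1C_comm hQ]
  linear_combination -hcsp

theorem csp_from_bilinear
    (f : ℝ → ℝ → ℝ) (g : ℝ → ℝ → ℂ) (Q : ℝ → ℝ → ℂ)
    (hf : ContDiff ℝ 3 (fun p : ℝ × ℝ => f p.1 p.2))
    (hfpos : ∀ y s, 0 < f y s)
    (hg : ContDiff ℝ 2 (fun p : ℝ × ℝ => g p.1 p.2))
    (hQ : ContDiff ℝ 2 (fun p : ℝ × ℝ => Q p.1 p.2))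
    (hbil1 : ∀ y s,
      pd1C (pd2C (fun y' s' => (f y' s' : ℂ))) y s * g y s
        - pd2C (fun y' s' => (f y' s' : ℂ)) y s * pd1C g y s
        - pd1C (fun y' s' => (f y' s' : ℂ)) y s * pd2C g y s
        + (f y s : ℂ) * pd1C (pd2C g) y s
      = (f y s : ℂ) * g y s)
    (hbil2 : ∀ y s,
      2 * (pd2R (pd2R f) y s * f y s - (pd2R f y s)^2)
        = (1/2) * ‖g y s‖^2)
    (φ : ℝ → ℝ → ℝ)
    (hφ : ∀ y s, φ y s = y - 2 * pd2R f y s / f y s)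
    (hrel : ∀ y s, g y s / (f y s : ℂ) = Q (φ y s) (-s)) :
    ∀ y s, 1 - 2 * pd1R (pd2R (fun y' s' => Real.log (f y' s'))) y s ≠ 0 →
      pd2C (pd1C Q) (φ y s) (-s) + Q (φ y s) (-s)
        + (1/2) * pd1C (fun x t => (‖Q x t‖ : ℂ)^2 * pd1C Q x t) (φ y s) (-s)
      = 0 := by
  have hf2 : ContDiff ℝ 2 (uncurry f) := hf.of_le (by norm_num)
  obtain rfl : φ = fun y s => y - 2 * pd2R f y s / f y s := funext₂ hφ
  have hu : (fun y s => Q (y - 2 * pd2R f y s / f y s) (-s)) = fun y s => g y s / f y s :=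
    funext₂ fun y s => (hrel y s).symm
  intro y s hρ
  refine csp_of_hodograph (X := fun y s => y - 2 * pd2R f y s / f y s) hQ (fun y s => ?_)
    (hasDerivAt_hodograph_fst hfpos hf2 y s) hρ ?_
  · rw [← hrel]
    exact hasDerivAt_hodograph_snd hfpos hf2 (hbil2 y s)
  · rw [hu, ← hrel]
    exact pd1C_pd2C_div_of_hirotaDsDy hfpos hf2 hg (hbil1 y s)
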